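/- arXiv:2511.13847 — 2 statements merged into one kernel-verified Lean document; each statement's English description precedes it below -/
import Mathlib

section
/- Let Σ₁, Σ₂ ∈ 𝕊^d be symmetric positive definite with precision matrices Σ₁^{-1}, Σ₂^{-1} having sparsity pattern G (a graph on {1,…,d}), and let p be a polynomial of degree k. Then every entry (i,j) of the matrix p(Σ₁^{-1}Σ₂^{-1})·Σ₁^{-1} with dist_G(i,j) > 2k+1 vanishes; equivalently, its projection onto the complement of the sparsity pattern of G^{2k+1} is zero. -/
open Matrix BigOperators

open Classical in
noncomputable def sqrtm {d : ℕ} (A : Matrix (Fin d) (Fin d) ℝ) : Matrix (Fin d) (Fin d) ℝ :=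
  if h : A.PosSemidef then (h.1.eigenvectorUnitary : Matrix (Fin d) (Fin d) ℝ) *
    diagonal ((↑) ∘ (√·) ∘ h.1.eigenvalues) * (star h.1.eigenvectorUnitary : Matrix (Fin d) (Fin d) ℝ)
    else 0

/-- The spectral norm (ℓ²-operator norm) of a real matrix. -/
noncomputable def specNorm {d : ℕ} (M : Matrix (Fin d) (Fin d) ℝ) : ℝ :=
  ‖LinearMap.toContinuousLinearMap (Matrix.toEuclideanLin M)‖

/-! Distances add under matrix multiplication, because an entry of `M * N` is a sum over
intermediate vertices. A polynomial of degree `k` in `V₁⁻¹ * V₂⁻¹` therefore only reaches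
distance `2 * k`, and the final factor `V₁⁻¹` adds one more step. -/

namespace Matrix

variable {V R : Type*}

def SupportedWithinDist [Zero R] (G : SimpleGraph V) (n : ℕ) (M : Matrix V V R) : Prop :=
  ∀ i j, M i j ≠ 0 → ∃ w : G.Walk i j, w.length ≤ n

namespace SupportedWithinDist

variable {G : SimpleGraph V} {m n : ℕ}

theorem apply_eq_zero [Zero R] {M : Matrix V V R} (hM : SupportedWithinDist G n M) {i j : V}
    (hij : ∀ w : G.Walk i j, n < w.length) : M i j = 0 := by
  by_contra hne
  obtain ⟨w, hw⟩ := hM i j hne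
  exact (hij w).not_ge hw

theorem mono [Zero R] {M : Matrix V V R} (hM : SupportedWithinDist G m M) (hmn : m ≤ n) :
    SupportedWithinDist G n M :=
  fun i j hij => (hM i j hij).imp fun _ hw => hw.trans hmn

theorem of_forall_not_adj [Zero R] {M : Matrix V V R}
    (hM : ∀ i j, i ≠ j → ¬ G.Adj i j → M i j = 0) : SupportedWithinDist G 1 M := by
  intro i j hij
  by_cases heq : i = j
  · subst heq
    exact ⟨.nil, zero_le_one⟩
  · exact ⟨.cons (not_not.mp fun hadj => hij (hM i j heq hadj)) .nil, le_rfl⟩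

theorem zero [Zero R] : SupportedWithinDist G n (0 : Matrix V V R) :=
  fun _ _ h => absurd rfl h

theorem one [DecidableEq V] [Zero R] [One R] : SupportedWithinDist G 0 (1 : Matrix V V R) := by
  intro i j hij
  obtain rfl : i = j := by_contra fun hne => hij (one_apply_ne hne)
  exact ⟨.nil, le_rfl⟩

theorem add [AddZeroClass R] {M N : Matrix V V R} (hM : SupportedWithinDist G n M)
    (hN : SupportedWithinDist G n N) : SupportedWithinDist G n (M + N) := by
  intro i j hij
  by_cases hMij : M i j = 0
  · exact hN i j (by simpa [hMij] using hij)
  · exact hM i j hMij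

theorem sum [AddCommMonoid R] {ι : Type*} {s : Finset ι} {f : ι → Matrix V V R}
    (hf : ∀ a ∈ s, SupportedWithinDist G n (f a)) : SupportedWithinDist G n (∑ a ∈ s, f a) :=
  Finset.sum_induction f _ (fun _ _ => add) zero hf

theorem smul [Zero R] [SMulZeroClass R R] {M : Matrix V V R} (hM : SupportedWithinDist G n M)
    (c : R) : SupportedWithinDist G n (c • M) :=
  fun i j hij => hM i j fun h => hij (by rw [smul_apply, h, smul_zero])

theorem mul [Fintype V] [NonUnitalNonAssocSemiring R] {M N : Matrix V V R}
    (hM : SupportedWithinDist G m M) (hN : SupportedWithinDist G n N) :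
    SupportedWithinDist G (m + n) (M * N) := by
  intro i j hij
  obtain ⟨l, -, hl⟩ := Finset.exists_ne_zero_of_sum_ne_zero hij
  obtain ⟨w₁, hw₁⟩ := hM i l (left_ne_zero_of_mul hl)
  obtain ⟨w₂, hw₂⟩ := hN l j (right_ne_zero_of_mul hl)
  exact ⟨w₁.append w₂, by rw [SimpleGraph.Walk.length_append]; omega⟩

theorem pow [Fintype V] [DecidableEq V] [Semiring R] {M : Matrix V V R}
    (hM : SupportedWithinDist G n M) (t : ℕ) : SupportedWithinDist G (n * t) (M ^ t) := by
  induction t with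
  | zero => exact one
  | succ t ih => simpa only [pow_succ, Nat.mul_succ] using ih.mul hM

theorem aeval [Fintype V] [DecidableEq V] [CommSemiring R] {M : Matrix V V R}
    (hM : SupportedWithinDist G n M) {p : Polynomial R} {k : ℕ} (hdeg : p.natDegree ≤ k) :
    SupportedWithinDist G (n * k) (Polynomial.aeval M p) := by
  rw [Polynomial.aeval_eq_sum_range' (Nat.lt_succ_of_le hdeg)]
  refine sum fun t ht => ((hM.pow t).smul _).mono ?_
  exact Nat.mul_le_mul_left n (Nat.lt_succ_iff.mp (Finset.mem_range.mp ht))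

end SupportedWithinDist

end Matrix

theorem stmt3_general {d : ℕ} (G : SimpleGraph (Fin d))
    (V₁ V₂ : Matrix (Fin d) (Fin d) ℝ)
    (hp1 : ∀ i j, i ≠ j → ¬ G.Adj i j → V₁⁻¹ i j = 0)
    (hp2 : ∀ i j, i ≠ j → ¬ G.Adj i j → V₂⁻¹ i j = 0)
    (k : ℕ) (p : Polynomial ℝ) (hdeg : p.natDegree ≤ k) :
    ∀ i j, (∀ w : G.Walk i j, 2 * k + 1 < w.length) →
      (Polynomial.aeval (V₁⁻¹ * V₂⁻¹) p * V₁⁻¹) i j = 0 := by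
  have h₁ := SupportedWithinDist.of_forall_not_adj hp1
  have h₂ := SupportedWithinDist.of_forall_not_adj hp2
  have hprod : SupportedWithinDist G (2 * k + 1) (Polynomial.aeval (V₁⁻¹ * V₂⁻¹) p * V₁⁻¹) :=
    ((h₁.mul h₂).aeval hdeg).mul h₁
  exact fun i j hij => hprod.apply_eq_zero hij

theorem stmt3 {d : ℕ} (G : SimpleGraph (Fin d))
    (V₁ V₂ : Matrix (Fin d) (Fin d) ℝ) (h1 : V₁.PosDef) (h2 : V₂.PosDef)
    (hp1 : ∀ i j, i ≠ j → ¬ G.Adj i j → V₁⁻¹ i j = 0)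
    (hp2 : ∀ i j, i ≠ j → ¬ G.Adj i j → V₂⁻¹ i j = 0)
    (k : ℕ) (p : Polynomial ℝ) (hdeg : p.natDegree ≤ k) :
    ∀ i j, (∀ w : G.Walk i j, 2 * k + 1 < w.length) →
      (Polynomial.aeval (V₁⁻¹ * V₂⁻¹) p * V₁⁻¹) i j = 0 :=
  stmt3_general G V₁ V₂ hp1 hp2 k p hdeg
end

section
/- Let μ = N(m₁, Σ₁) and ν = N(m₂, Σ₂) be Gaussian measures on ℝ^d with Σ₁, Σ₂ positive definite. Define Λ₁ = Σ₁^{-1/2}(Σ₁^{1/2} Σ₂ Σ₁^{1/2})^{1/2} Σ₁^{-1/2} and Λ₂ = Σ₁^{1/2}(Σ₁^{1/2} Σ₂ Σ₁^{1/2})^{-1/2} Σ₁^{1/2}. Then the 2d×2d block matrix [[Λ₁, −I],[−I, Λ₂]] is positive semidefinite. -/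
open Matrix BigOperators

/-!
Write `S = Σ₁^{1/2}` and `M = (S Σ₂ S)^{1/2}`, both positive definite. Then `Λ₁ = S⁻¹ M S⁻¹` is
positive definite and `Λ₂ = S M⁻¹ S` is exactly its inverse, so the Schur complement
`Λ₂ - (-I) Λ₁⁻¹ (-I)` of the block matrix vanishes.
-/

namespace Matrix

variable {n K : Type*} [Fintype n] [DecidableEq n]

theorem PosDef.mul_mul_of_isHermitian [CommRing K] [PartialOrder K] [StarRing K]
    {A B : Matrix n n K} (hA : A.PosDef) (hB : B.IsHermitian) (hB' : IsUnit B) :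
    (B * A * B).PosDef :=
  by simpa only [hB.eq] using hA.conjTranspose_mul_mul_same (mulVec_injective_of_isUnit hB')

theorem inv_inv_mul_mul_inv [CommRing K] {S M : Matrix n n K} (hS : IsUnit S.det) :
    (S⁻¹ * M * S⁻¹)⁻¹ = S * M⁻¹ * S := by
  rw [mul_inv_rev, mul_inv_rev, nonsing_inv_nonsing_inv S hS, mul_assoc]

theorem PosDef.posSemidef_fromBlocks_neg_one_inv [Field K] [PartialOrder K] [StarRing K]
    [StarOrderedRing K] {A : Matrix n n K} (hA : A.PosDef) :
    (fromBlocks A (-1) (-1) A⁻¹).PosSemidef := by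
  have : Invertible A := hA.isUnit.invertible
  have h := (PosDef.fromBlocks₁₁ (-1) A⁻¹ hA).mpr
  simp only [conjTranspose_neg, conjTranspose_one, neg_mul, one_mul, mul_neg, mul_one, neg_neg,
    sub_self] at h
  exact h PosSemidef.zero

end Matrix

theorem posDef_sqrtm {d : ℕ} {A : Matrix (Fin d) (Fin d) ℝ} (hA : A.PosDef) :
    (sqrtm A).PosDef := by
  rw [sqrtm, dif_pos hA.posSemidef,
    IsUnit.posDef_star_right_conjugate_iff Unitary.isUnit_coe, posDef_diagonal_iff]
  intro i
  simpa [Real.sqrt_pos] using hA.eigenvalues_pos i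

theorem stmt5 {d : ℕ} (V₁ V₂ : Matrix (Fin d) (Fin d) ℝ)
    (h1 : V₁.PosDef) (h2 : V₂.PosDef) :
    (Matrix.fromBlocks
      ((sqrtm V₁)⁻¹ * sqrtm (sqrtm V₁ * V₂ * sqrtm V₁) * (sqrtm V₁)⁻¹) (-1) (-1)
      (sqrtm V₁ * (sqrtm (sqrtm V₁ * V₂ * sqrtm V₁))⁻¹ * sqrtm V₁)).PosSemidef := by
  set S := sqrtm V₁
  have hS : S.PosDef := posDef_sqrtm h1
  have hM : (sqrtm (S * V₂ * S)).PosDef :=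
    posDef_sqrtm (h2.mul_mul_of_isHermitian hS.isHermitian hS.isUnit)
  have hΛ₁ : (S⁻¹ * sqrtm (S * V₂ * S) * S⁻¹).PosDef :=
    hM.mul_mul_of_isHermitian hS.inv.isHermitian hS.inv.isUnit
  rw [← inv_inv_mul_mul_inv hS.det_pos.ne'.isUnit]
  exact hΛ₁.posSemidef_fromBlocks_neg_one_inv
end
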